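/- A polynomial vector field X(z) = P(z) ∂/∂z on ℂ is complete (all complex-time trajectories defined for all time) if and only if deg P ≤ 1. -/

import Mathlib

/-!
For `deg P ≤ 1` the solutions are explicit (affine or exponential). For `deg P = k + 1 ≥ 2`
with leading coefficient `a`, put `u = (γ t₀ / γ) ^ k`; then `u' = -k (γ t₀)^k P(γ) / γ^(k+1)`,
which is close to `-k a (γ t₀)^k` while `|γ|` is large. Along the ray from `t₀` in which this
constant is a negative real, `u` runs from `1` to nearly `0`, so `|γ|` doubles within time
`O(1 / |γ t₀|)`. These times are summable, so a solution starting far out is unbounded on a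
bounded disc and cannot be entire.
-/

open Polynomial Filter Set Topology Bornology Asymptotics

theorem Polynomial.tendsto_eval_div_leading_monomial {𝕜 : Type*} [NormedField 𝕜] {P : 𝕜[X]}
    (hP : P ≠ 0) :
    Tendsto (fun z => P.eval z / (P.leadingCoeff * z ^ P.natDegree)) (cobounded 𝕜) (𝓝 1) := by
  refine (isEquivalent_iff_tendsto_one ?_).1 isEquivalent_cobounded_leading_monomial
  filter_upwards [eventually_ne_cobounded 0] with z hz
  exact mul_ne_zero (leadingCoeff_ne_zero.2 hP) (pow_ne_zero _ hz)

theorem HasDerivAt.const_div_pow {𝕜 𝕜' : Type*} [NontriviallyNormedField 𝕜]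
    [NontriviallyNormedField 𝕜'] [NormedAlgebra 𝕜 𝕜'] {f : 𝕜 → 𝕜'} {f' : 𝕜'} {x : 𝕜}
    (c : 𝕜') (k : ℕ) (hf : HasDerivAt f f' x) (hx : f x ≠ 0) :
    HasDerivAt (fun y => (c / f y) ^ k) (-(k * c ^ k * f' / f x ^ (k + 1))) x := by
  have h := ((hf.inv hx).const_mul c).fun_pow k
  simp only [Pi.inv_apply, ← div_eq_mul_inv] at h
  convert h using 1
  rcases k with _ | k
  · simp
  · rw [Nat.add_sub_cancel, div_pow]
    field_simp
    ring

theorem forall_mem_Icc_le_of_bootstrap {φ : ℝ → ℝ} {a b c : ℝ} (hφ : Continuous φ)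
    (ha : c ≤ φ a) (h : ∀ s ∈ Icc a b, (∀ σ ∈ Icc a s, c ≤ φ σ) → c < φ s) :
    ∀ s ∈ Icc a b, c ≤ φ s := by
  have hclosed : IsClosed ({σ | c ≤ φ σ} ∩ Icc a b) :=
    (isClosed_le continuous_const hφ).inter isClosed_Icc
  refine fun s hs =>
    hclosed.Icc_subset_of_forall_mem_nhdsGT_of_Icc_subset ha (fun t ht hat => ?_) hs
  have hlt : c < φ t := h t (Ico_subset_Icc_self ht) hat
  filter_upwards [nhdsWithin_le_nhds ((hφ.tendsto t).eventually_const_lt hlt)] with σ hσ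
  exact hσ.le

theorem norm_lt_of_forall_exists_two_mul_norm_le {E F : Type*} [NormedAddCommGroup E]
    [ProperSpace E] [NormedAddCommGroup F] {f : E → F} (hf : Continuous f) {R κ : ℝ} (hR : 0 < R)
    (hstep : ∀ x, R ≤ ‖f x‖ → ∃ y, ‖y - x‖ ≤ κ / ‖f x‖ ∧ 2 * ‖f x‖ ≤ ‖f y‖) (x₀ : E) :
    ‖f x₀‖ < R := by
  by_contra! h₀
  have hκ : 0 ≤ κ := by
    obtain ⟨y, hy, -⟩ := hstep x₀ h₀
    simpa using (le_div_iff₀ (hR.trans_le h₀)).1 ((norm_nonneg _).trans hy)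
  -- the steps shrink geometrically, so the points `x` stay in a fixed ball around `x₀`
  have hfar : ∀ n : ℕ, ∃ x, ‖x - x₀‖ ≤ 2 * κ / R - 2 * κ / ‖f x‖ ∧ 2 ^ n * R ≤ ‖f x‖ := by
    intro n
    induction n with
    | zero =>
      refine ⟨x₀, ?_, by simpa using h₀⟩
      simpa using div_le_div_of_nonneg_left (by positivity) hR h₀
    | succ n ih =>
      obtain ⟨x, hx, hfx⟩ := ih
      have hRx : R ≤ ‖f x‖ := le_trans (le_mul_of_one_le_left hR.le (one_le_pow₀ one_le_two)) hfx
      obtain ⟨y, hxy, hfy⟩ := hstep x hRx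
      have hfx0 : 0 < ‖f x‖ := hR.trans_le hRx
      have hshrink : 2 * κ / ‖f y‖ ≤ κ / ‖f x‖ := by
        rw [div_le_div_iff₀ (by linarith) hfx0]
        nlinarith
      refine ⟨y, ?_, by rw [pow_succ]; linarith⟩
      linarith [norm_sub_le_norm_sub_add_norm_sub y x x₀, mul_div_assoc 2 κ ‖f x‖]
  obtain ⟨B, hB⟩ :=
    (isCompact_closedBall x₀ (2 * κ / R)).exists_bound_of_continuousOn hf.continuousOn
  obtain ⟨n, hn⟩ := pow_unbounded_of_one_lt (B / R) one_lt_two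
  obtain ⟨x, hx, hfx⟩ := hfar n
  have hxB : ‖f x‖ ≤ B := by
    refine hB x (mem_closedBall_iff_norm.2 (hx.trans ?_))
    have : 0 ≤ 2 * κ / ‖f x‖ := by positivity
    linarith
  rw [div_lt_iff₀ hR] at hn
  linarith

theorem two_mul_norm_le_norm_of_hasDerivAt {g g' : ℝ → ℂ} {k : ℕ} (hk : k ≠ 0)
    (hg : ∀ s, HasDerivAt g (g' s) s)
    (hg' : ∀ s ∈ Icc (0 : ℝ) 1, ‖g 0‖ / 2 ≤ ‖g s‖ →
      ‖k * g 0 ^ k * g' s / g s ^ (k + 1) - 1‖ ≤ (1 / 2) ^ k) :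
    2 * ‖g 0‖ ≤ ‖g 1‖ := by
  set r := ‖g 0‖
  obtain hr | hr := (norm_nonneg (g 0)).eq_or_lt
  · simp [r, ← hr]
  have hg0 : g 0 ≠ 0 := norm_pos_iff.1 hr
  -- `u = (g 0 / g) ^ k` has derivative within `(1/2)^k` of `-1`, so it runs from `1` to near `0`
  have hu : ∀ s ∈ Icc (0 : ℝ) 1, (∀ σ ∈ Icc 0 s, r / 2 ≤ ‖g σ‖) →
      (r / ‖g s‖) ^ k ≤ 1 - s + (1 / 2) ^ k * s := by
    intro s hs hfar
    have hderiv : ∀ σ ∈ Icc 0 s, HasDerivWithinAt (fun σ : ℝ => (g 0 / g σ) ^ k + σ)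
        (-(k * g 0 ^ k * g' σ / g σ ^ (k + 1)) + 1) (Icc 0 s) σ := fun σ hσ =>
      (((hg σ).const_div_pow (g 0) k (norm_pos_iff.1 (by linarith [hfar σ hσ]))).add
        (hasDerivAt_id σ).ofReal_comp).hasDerivWithinAt
    have hmvt := norm_image_sub_le_of_norm_deriv_le_segment' hderiv (fun σ hσ => by
      rw [← norm_neg, neg_add, neg_neg, ← sub_eq_add_neg]
      exact hg' σ ⟨hσ.1, hσ.2.le.trans hs.2⟩ (hfar σ (Ico_subset_Icc_self hσ)))
      s (right_mem_Icc.2 hs.1)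
    simp only [div_self hg0, one_pow, Complex.ofReal_zero, add_zero, sub_zero] at hmvt
    calc (r / ‖g s‖) ^ k = ‖((g 0 / g s) ^ k + s - 1) + ((1 - s : ℝ) : ℂ)‖ := by
          rw [← norm_div, ← norm_pow]
          push_cast
          ring_nf
      _ ≤ ‖(g 0 / g s) ^ k + s - 1‖ + ‖((1 - s : ℝ) : ℂ)‖ := norm_add_le _ _
      _ ≤ 1 - s + (1 / 2) ^ k * s := by
          rw [Complex.norm_real, Real.norm_of_nonneg (by linarith [hs.2])]
          linarith
  have hfar : ∀ s ∈ Icc (0 : ℝ) 1, r / 2 ≤ ‖g s‖ := by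
    refine forall_mem_Icc_le_of_bootstrap (continuous_iff_continuousAt.2 fun s =>
      (hg s).continuousAt).norm (by linarith) fun s hs hfar => ?_
    have hgs : 0 < ‖g s‖ := by linarith [hfar s (right_mem_Icc.2 hs.1)]
    have hδ : ((1 : ℝ) / 2) ^ k ≤ 1 := pow_le_one₀ (by norm_num) (by norm_num)
    have hle : r / ‖g s‖ ≤ 1 := (pow_le_one_iff_of_nonneg (by positivity) hk).1
      ((hu s hs hfar).trans (by nlinarith [hs.1]))
    rw [div_le_one hgs] at hle
    linarith
  have hg1 : 0 < ‖g 1‖ := by linarith [hfar 1 (right_mem_Icc.2 zero_le_one)]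
  have hle : r / ‖g 1‖ ≤ 1 / 2 := (pow_le_pow_iff_left₀ (by positivity) (by norm_num) hk).1
    (by simpa using hu 1 (right_mem_Icc.2 zero_le_one) hfar)
  rw [div_le_iff₀ hg1] at hle
  linarith

theorem Polynomial.exists_pos_forall_exists_two_mul_norm_le {P : ℂ[X]} (hd : 2 ≤ P.natDegree) :
    ∃ R > 0, ∀ γ : ℂ → ℂ, (∀ t, HasDerivAt γ (P.eval (γ t)) t) → ∀ t₀, R ≤ ‖γ t₀‖ →
      ∃ t₁, ‖t₁ - t₀‖ ≤ ‖P.leadingCoeff‖⁻¹ / ‖γ t₀‖ ∧ 2 * ‖γ t₀‖ ≤ ‖γ t₁‖ := by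
  obtain ⟨k, hk⟩ : ∃ k, P.natDegree = k + 1 := ⟨P.natDegree - 1, by omega⟩
  have hk0 : k ≠ 0 := by omega
  have hP : P ≠ 0 := by rintro rfl; simp at hd
  set a := P.leadingCoeff
  have ha : a ≠ 0 := leadingCoeff_ne_zero.2 hP
  obtain ⟨R₀, -, hR₀⟩ := hasBasis_cobounded_norm.eventually_iff.1 <|
    (tendsto_eval_div_leading_monomial hP).eventually
      (Metric.closedBall_mem_nhds 1 (by positivity : (0 : ℝ) < (1 / 2) ^ k))
  refine ⟨max 1 (2 * R₀), by positivity, fun γ hγ t₀ ht₀ => ?_⟩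
  set z₁ := γ t₀
  have hr : 1 ≤ ‖z₁‖ := le_of_max_le_left ht₀
  have hz₁ : z₁ ≠ 0 := norm_pos_iff.1 (by linarith)
  -- `e` rescales time so that `d/ds (z₁ / γ (t₀ + s e)) ^ k = -P(γ) / (a γ ^ (k + 1)) → -1`
  set e := (k * z₁ ^ k * a)⁻¹
  refine ⟨t₀ + e, ?_, ?_⟩
  · rw [add_sub_cancel_left, norm_inv, norm_mul, norm_mul, norm_pow, Complex.norm_natCast,
      div_eq_mul_inv, ← mul_inv]
    refine inv_anti₀ (by positivity) ?_
    have hpow : ‖z₁‖ ≤ ‖z₁‖ ^ k := le_self_pow₀ hr hk0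
    have hk1 : (1 : ℝ) ≤ k := Nat.one_le_cast.2 (Nat.pos_of_ne_zero hk0)
    calc ‖a‖ * ‖z₁‖ ≤ 1 * ‖z₁‖ ^ k * ‖a‖ := by nlinarith [norm_nonneg a]
      _ ≤ k * ‖z₁‖ ^ k * ‖a‖ := by gcongr
  · have := two_mul_norm_le_norm_of_hasDerivAt (g := fun s : ℝ => γ (t₀ + s * e))
      (g' := fun s => P.eval (γ (t₀ + s * e)) * e) hk0 (fun s => ?_) (fun s hs hfar => ?_)
    · simpa using this
    · have h := (hγ (t₀ + s * e)).comp (s : ℂ)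
        (((hasDerivAt_id (s : ℂ)).mul_const e).const_add t₀)
      simpa using h.comp_ofReal
    · set w := γ (t₀ + s * e)
      simp only [Complex.ofReal_zero, zero_mul, add_zero] at hfar
      have hw : R₀ ≤ ‖w‖ := by linarith [le_of_max_le_right ht₀]
      have hw0 : w ≠ 0 := norm_pos_iff.1 (by linarith)
      have hkey : k * z₁ ^ k * (P.eval w * e) / w ^ (k + 1) =
          P.eval w / (a * w ^ P.natDegree) := by
        have : (k : ℂ) ≠ 0 := Nat.cast_ne_zero.2 hk0
        simp only [hk, e]
        field_simp
      simp only [Complex.ofReal_zero, zero_mul, add_zero]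
      rw [show γ t₀ = z₁ from rfl, hkey, ← dist_eq_norm]
      exact hR₀ hw

theorem Polynomial.exists_hasDerivAt_eval_of_degree_le_one {P : ℂ[X]} (hP : P.degree ≤ 1)
    (z₀ : ℂ) : ∃ γ : ℂ → ℂ, γ 0 = z₀ ∧ ∀ t, HasDerivAt γ (P.eval (γ t)) t := by
  set b := P.coeff 1
  set c := P.coeff 0
  have heval : ∀ z, P.eval z = b * z + c := fun z => by
    rw [eq_X_add_C_of_degree_le_one hP]; simp [b, c]
  simp only [heval]
  by_cases hb : b = 0
  · refine ⟨fun t => z₀ + c * t, by simp, fun t => ?_⟩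
    simpa [hb] using ((hasDerivAt_id t).const_mul c).const_add z₀
  · refine ⟨fun t => Complex.exp (b * t) * (z₀ + c / b) - c / b, by simp, fun t => ?_⟩
    refine ((((hasDerivAt_id t).const_mul b).cexp).mul_const (z₀ + c / b)).sub_const (c / b)
      |>.congr_deriv ?_
    simp only [id]
    field_simp
    ring

/-- A polynomial vector field X = P(z)∂/∂z on ℂ is complete (every complex-time
trajectory is defined for all time and every initial condition) if and only if
deg P ≤ 1. -/
theorem polynomial_vf_complete_iff_deg_le_one (P : Polynomial ℂ) :
    (∀ z₀ : ℂ, ∃ γ : ℂ → ℂ, γ 0 = z₀ ∧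
      ∀ t : ℂ, HasDerivAt γ (P.eval (γ t)) t) ↔ P.degree ≤ 1 := by
  refine ⟨fun hcomplete => ?_, P.exists_hasDerivAt_eval_of_degree_le_one⟩
  by_contra! hdeg
  have hd : 2 ≤ P.natDegree := by
    by_contra! h
    exact hdeg.not_ge (degree_le_of_natDegree_le (Nat.le_of_lt_succ h))
  obtain ⟨R, hR, hstep⟩ := exists_pos_forall_exists_two_mul_norm_le hd
  obtain ⟨γ, hγ0, hγ⟩ := hcomplete R
  have hsmall := norm_lt_of_forall_exists_two_mul_norm_le
    (continuous_iff_continuousAt.2 fun t => (hγ t).continuousAt) hR (hstep γ hγ) 0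
  simp [hγ0, abs_of_pos hR] at hsmall
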